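/- Define α_n(k) for n ≥ 1 by 2^{n·α_n(k)} = (1/2^n)|Σ_{j=0}^{2^n−1} η_j e^{−2πi j k}|² whenever the right side is nonzero; equivalently α_{2^n}(k) = 1 + (2/(n log 2)) Σ_{j=0}^{n−1} log|sin(π 2^j k)|. Then for almost every k ∈ ℝ (with respect to Lebesgue measure), lim_{n→∞} α_{2^n}(k) = −1. -/

import Mathlib

/-!
With `g x = log 2 + log |sin (π x)|` one has
`α_{2^n}(k) = -1 + (2 / log 2) · (1/n) ∑_{j<n} g (2^j k)`, so the claim is a strong law of large
numbers for `g` along the doubling map. The function `g` is 1-periodic, square integrable on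
`[0, 1]`, and by the duplication formula for the sine it satisfies `g (x/2) + g ((x+1)/2) = g x`:
the transfer operator of `x ↦ 2x mod 1` halves it. Hence
`∫₀¹ g (2^i x) g (2^j x) dx = 2^{-|i-j|} ∫₀¹ g²`, and the partial sums have second moment `O(n)`.
Borel–Cantelli along the squares `n = m²`, with the gaps between consecutive squares controlled by
Cauchy–Schwarz, gives `(1/n) ∑_{j<n} g (2^j k) → 0` for almost every `k ∈ (0, 1]`, hence by
periodicity for almost every real `k`.
-/

open Real Filter MeasureTheory

/-- The scaling exponent `α_{2^n}(k)`, defined via the Riesz-product identity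
`(1/2^n) |∑_{j<2^n} η_j e^{-2πijk}|² = 2^{n α_{2^n}(k)}`, equivalently
`α_{2^n}(k) = 1 + (2/(n log 2)) ∑_{j<n} log |sin (π 2^j k)|`. -/
noncomputable def tmScalingExp (n : ℕ) (k : ℝ) : ℝ :=
  1 + 2 / (n * Real.log 2) * ∑ j ∈ Finset.range n, Real.log |Real.sin (Real.pi * 2 ^ j * k)|

open Finset Topology

lemma tendsto_sum_range_div_of_tendsto_sq {x : ℕ → ℝ}
    (hS : Tendsto (fun m : ℕ => (∑ j ∈ range (m ^ 2), x j) / (m : ℝ) ^ 2) atTop (𝓝 0))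
    (hD : Tendsto (fun m : ℕ => (∑ j ∈ Ico (m ^ 2) ((m + 1) ^ 2), |x j|) / (m : ℝ) ^ 2)
      atTop (𝓝 0)) :
    Tendsto (fun n : ℕ => (∑ j ∈ range n, x j) / n) atTop (𝓝 0) := by
  set D : ℕ → ℝ := fun m => ∑ j ∈ Ico (m ^ 2) ((m + 1) ^ 2), |x j|
  have hsqrt : Tendsto Nat.sqrt atTop atTop :=
    tendsto_atTop_atTop.mpr fun b => ⟨b * b, fun n hn => Nat.le_sqrt.mpr hn⟩
  have hbound := ((hS.abs.add hD).comp hsqrt)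
  rw [abs_zero, add_zero] at hbound
  refine squeeze_zero_norm' ?_ hbound
  filter_upwards [eventually_ge_atTop 1] with n hn
  set m := Nat.sqrt n
  have hm_pos : (0 : ℝ) < (m : ℝ) ^ 2 := by
    have : 0 < m := Nat.sqrt_pos.mpr hn
    positivity
  have hm_le : m ^ 2 ≤ n := Nat.sqrt_le' n
  have hn_le : n ≤ (m + 1) ^ 2 := (Nat.lt_succ_sqrt' n).le
  have hgap : |∑ j ∈ range n, x j - ∑ j ∈ range (m ^ 2), x j| ≤ D m := by
    rw [← Finset.sum_Ico_eq_sub _ hm_le]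
    refine (abs_sum_le_sum_abs _ _).trans ?_
    exact sum_le_sum_of_subset_of_nonneg (Ico_subset_Ico le_rfl hn_le)
      fun _ _ _ => abs_nonneg _
  have hmn : (m : ℝ) ^ 2 ≤ n := by exact_mod_cast hm_le
  calc ‖(∑ j ∈ range n, x j) / n‖
      ≤ |∑ j ∈ range n, x j| / (m : ℝ) ^ 2 := by
        rw [norm_div, Real.norm_natCast, Real.norm_eq_abs]
        exact div_le_div_of_nonneg_left (abs_nonneg _) hm_pos hmn
    _ ≤ (|∑ j ∈ range (m ^ 2), x j| + D m) / (m : ℝ) ^ 2 := by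
        gcongr
        linarith [abs_sub_abs_le_abs_sub (∑ j ∈ range n, x j) (∑ j ∈ range (m ^ 2), x j)]
    _ = |(∑ j ∈ range (m ^ 2), x j) / (m : ℝ) ^ 2| + D m / (m : ℝ) ^ 2 := by
        rw [add_div, abs_div, abs_of_pos hm_pos]

lemma sum_range_half_pow_dist_le (n j : ℕ) :
    ∑ i ∈ range n, (1 / 2 : ℝ) ^ Nat.dist i j ≤ 4 := by
  calc ∑ i ∈ range n, (1 / 2 : ℝ) ^ Nat.dist i j
      ≤ ∑ i ∈ range (j + n), (1 / 2 : ℝ) ^ Nat.dist i j :=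
        sum_le_sum_of_subset_of_nonneg (range_subset_range.mpr (by omega))
          fun _ _ _ => by positivity
    _ = ∑ i ∈ range j, (1 / 2 : ℝ) ^ (i + 1) + ∑ k ∈ range n, (1 / 2 : ℝ) ^ k := by
        rw [sum_range_add, ← sum_range_reflect]
        congr 1 <;> refine sum_congr rfl fun i hi => ?_
        · rw [mem_range] at hi
          rw [Nat.dist_eq_sub_of_le (by omega)]
          congr 1
          omega
        · simp [Nat.dist_eq_sub_of_le_right]
    _ ≤ 2 + 2 := by
        gcongr
        · exact (sum_le_sum fun i _ => pow_le_pow_of_le_one (by norm_num) (by norm_num)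
            (Nat.le_succ i)).trans (sum_geometric_two_le j)
        · exact sum_geometric_two_le n
    _ = 4 := by norm_num

section SecondMoment

variable {Ω : Type*} [MeasurableSpace Ω] {μ : Measure Ω}

lemma ae_tendsto_zero_of_summable_integral_sq {f : ℕ → Ω → ℝ}
    (hf : ∀ m, Integrable (fun ω => f m ω ^ 2) μ)
    (hsum : Summable fun m => ∫ ω, f m ω ^ 2 ∂μ) :
    ∀ᵐ ω ∂μ, Tendsto (fun m => f m ω) atTop (𝓝 0) := by
  have hmeas : ∀ m, AEMeasurable (fun ω => ENNReal.ofReal (f m ω ^ 2)) μ :=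
    fun m => (hf m).aemeasurable.ennreal_ofReal
  have hlint : ∫⁻ ω, ∑' m, ENNReal.ofReal (f m ω ^ 2) ∂μ ≠ ⊤ := by
    rw [lintegral_tsum hmeas]
    simp_rw [← ofReal_integral_eq_lintegral_ofReal (hf _) (ae_of_all _ fun _ => sq_nonneg _)]
    rw [← ENNReal.ofReal_tsum_of_nonneg (fun m => integral_nonneg fun _ => sq_nonneg _) hsum]
    exact ENNReal.ofReal_ne_top
  filter_upwards [ae_lt_top' (AEMeasurable.tsum hmeas) hlint] with ω hω
  have hsq : Summable fun m => f m ω ^ 2 := by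
    simpa [ENNReal.toReal_ofReal (sq_nonneg _)] using ENNReal.summable_toReal hω.ne
  have := (continuous_sqrt.tendsto 0).comp hsq.tendsto_atTop_zero
  simpa [Function.comp_def, sqrt_sq_eq_abs, tendsto_zero_iff_abs_tendsto_zero] using this

lemma ae_tendsto_div_sq_of_integral_sq_le {Y : ℕ → Ω → ℝ} (hY : ∀ m, MemLp (Y m) 2 μ)
    {C : ℝ} (hC : ∀ m, 1 ≤ m → ∫ ω, Y m ω ^ 2 ∂μ ≤ C * (m : ℝ) ^ 2) :
    ∀ᵐ ω ∂μ, Tendsto (fun m : ℕ => Y m ω / (m : ℝ) ^ 2) atTop (𝓝 0) := by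
  refine ae_tendsto_zero_of_summable_integral_sq
    (fun m => by simpa only [div_eq_mul_inv] using ((hY m).mul_const _).integrable_sq) ?_
  refine Summable.of_nonneg_of_le (fun _ => integral_nonneg fun _ => sq_nonneg _) (fun m => ?_)
    ((summable_one_div_nat_pow.mpr one_lt_two).mul_left C)
  simp_rw [div_pow]
  rw [integral_div]
  rcases Nat.eq_zero_or_pos m with rfl | hm
  · simp -- both sides vanish, as `x / 0 = 0`
  rw [div_le_iff₀ (by positivity)]
  calc ∫ ω, Y m ω ^ 2 ∂μ ≤ C * (m : ℝ) ^ 2 := hC m hm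
    _ = C * (1 / (m : ℝ) ^ 2) * ((m : ℝ) ^ 2) ^ 2 := by field_simp

lemma integral_sq_sum_abs_le {ι : Type*} (s : Finset ι) {X : ι → Ω → ℝ}
    (hX : ∀ j ∈ s, MemLp (X j) 2 μ) {C : ℝ}
    (hsq : ∀ j ∈ s, ∫ ω, X j ω ^ 2 ∂μ ≤ C) :
    ∫ ω, (∑ j ∈ s, |X j ω|) ^ 2 ∂μ ≤ (#s : ℝ) ^ 2 * C := by
  have hint : ∀ j ∈ s, Integrable (fun ω => X j ω ^ 2) μ :=
    fun j hj => (hX j hj).integrable_sq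
  calc ∫ ω, (∑ j ∈ s, |X j ω|) ^ 2 ∂μ
      ≤ ∫ ω, #s * ∑ j ∈ s, X j ω ^ 2 ∂μ :=
        integral_mono (memLp_finsetSum s fun j hj => (hX j hj).abs).integrable_sq
          ((integrable_finsetSum s hint).const_mul _) fun ω => by
            simpa only [sq_abs] using sq_sum_le_card_mul_sum_sq (s := s) (f := fun j => |X j ω|)
    _ = #s * ∑ j ∈ s, ∫ ω, X j ω ^ 2 ∂μ := by
        rw [integral_const_mul, integral_finsetSum s hint]
    _ ≤ #s * (#s * C) := by
        gcongr
        simpa using sum_le_card_nsmul s _ C hsq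
    _ = (#s : ℝ) ^ 2 * C := by ring

theorem ae_tendsto_sum_range_div_of_integral_sq_le {X : ℕ → Ω → ℝ}
    (hX : ∀ j, MemLp (X j) 2 μ) {C : ℝ}
    (hsum : ∀ n, ∫ ω, (∑ j ∈ range n, X j ω) ^ 2 ∂μ ≤ C * n)
    (hsq : ∀ j, ∫ ω, X j ω ^ 2 ∂μ ≤ C) :
    ∀ᵐ ω ∂μ, Tendsto (fun n : ℕ => (∑ j ∈ range n, X j ω) / n) atTop (𝓝 0) := by
  have hC : 0 ≤ C := (integral_nonneg fun _ => sq_nonneg _).trans (hsq 0)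
  have hS := ae_tendsto_div_sq_of_integral_sq_le
    (fun m => memLp_finsetSum (range (m ^ 2)) fun j _ => hX j) (C := C)
    fun m _ => by exact_mod_cast hsum (m ^ 2)
  have hD := ae_tendsto_div_sq_of_integral_sq_le
    (fun m => memLp_finsetSum (Ico (m ^ 2) ((m + 1) ^ 2)) fun j _ => (hX j).abs) (C := 9 * C)
    fun m hm => by
      have hcard : (#(Ico (m ^ 2) ((m + 1) ^ 2)) : ℝ) = 2 * m + 1 := by
        rw [Nat.card_Ico, Nat.cast_sub (Nat.pow_le_pow_left m.le_succ 2)]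
        push_cast
        ring
      have hm' : (1 : ℝ) ≤ m := by exact_mod_cast hm
      calc ∫ ω, (∑ j ∈ Ico (m ^ 2) ((m + 1) ^ 2), |X j ω|) ^ 2 ∂μ
          ≤ (2 * m + 1) ^ 2 * C :=
            hcard ▸ integral_sq_sum_abs_le _ (fun j _ => hX j) fun j _ => hsq j
        _ ≤ (3 * m) ^ 2 * C := by gcongr; linarith
        _ = 9 * C * (m : ℝ) ^ 2 := by ring
  filter_upwards [hS, hD] with ω hSω hDω
  exact tendsto_sum_range_div_of_tendsto_sq hSω hDω

lemma integral_sq_sum_le_of_integral_mul_le {X : ℕ → Ω → ℝ} (hX : ∀ j, MemLp (X j) 2 μ)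
    {σ : ℝ} (hσ : 0 ≤ σ)
    (hcov : ∀ i j, ∫ ω, X i ω * X j ω ∂μ ≤ σ * (1 / 2) ^ Nat.dist i j) (n : ℕ) :
    ∫ ω, (∑ j ∈ range n, X j ω) ^ 2 ∂μ ≤ 4 * σ * n := by
  have hint : ∀ i j, Integrable (fun ω => X i ω * X j ω) μ :=
    fun i j => (hX i).integrable_mul (hX j)
  simp_rw [sq, sum_mul_sum]
  rw [integral_finsetSum _ fun i _ => integrable_finsetSum _ fun j _ => hint i j]
  calc ∑ i ∈ range n, ∫ ω, ∑ j ∈ range n, X i ω * X j ω ∂μ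
      = ∑ i ∈ range n, ∑ j ∈ range n, ∫ ω, X i ω * X j ω ∂μ := by
        refine sum_congr rfl fun i _ => integral_finsetSum _ fun j _ => hint i j
    _ ≤ ∑ i ∈ range n, σ * ∑ j ∈ range n, (1 / 2 : ℝ) ^ Nat.dist j i := by
        gcongr with i _
        rw [mul_sum]
        gcongr with j _
        rw [Nat.dist_comm]
        exact hcov i j
    _ ≤ ∑ i ∈ range n, σ * 4 := by
        gcongr with i _
        exact sum_range_half_pow_dist_le n i
    _ = 4 * σ * n := by
        rw [sum_const, card_range, nsmul_eq_mul]
        ring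

theorem ae_tendsto_sum_range_div_of_integral_mul_le {X : ℕ → Ω → ℝ}
    (hX : ∀ j, MemLp (X j) 2 μ) {σ : ℝ}
    (hcov : ∀ i j, ∫ ω, X i ω * X j ω ∂μ ≤ σ * (1 / 2) ^ Nat.dist i j) :
    ∀ᵐ ω ∂μ, Tendsto (fun n : ℕ => (∑ j ∈ range n, X j ω) / n) atTop (𝓝 0) := by
  have hsq : ∀ j, ∫ ω, X j ω ^ 2 ∂μ ≤ σ := fun j => by simpa [sq] using hcov j j
  have hσ : 0 ≤ σ := (integral_nonneg fun _ => sq_nonneg _).trans (hsq 0)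
  exact ae_tendsto_sum_range_div_of_integral_sq_le hX
    (integral_sq_sum_le_of_integral_mul_le hX hσ hcov) fun j => (hsq j).trans (by linarith)

end SecondMoment

namespace Function.Periodic

lemma comp_nat_mul {α : Type*} {F : ℝ → α} (hF : Periodic F 1) (n : ℕ) :
    Periodic (fun x => F (n * x)) 1 := by
  intro x
  simpa [mul_add] using hF.nat_mul n (n * x)

lemma ae_of_ae_restrict_Ioc {β : Type*} {F : ℝ → β} {T : ℝ}
    (hF : Periodic F T) (hT : 0 < T) {t : ℝ} {p : β → Prop}
    (h : ∀ᵐ x ∂volume.restrict (Set.Ioc t (t + T)), p (F x)) : ∀ᵐ x, p (F x) := by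
  rw [ae_iff, Measure.restrict_apply' measurableSet_Ioc] at h
  rw [ae_iff]
  refine (isAddFundamentalDomain_Ioc hT t).measure_zero_of_invariant _ (fun g => ?_) h
  obtain ⟨n, hn⟩ := AddSubgroup.mem_zmultiples_iff.mp g.2
  ext x
  rw [Set.mem_vadd_set_iff_neg_vadd_mem, AddSubgroup.vadd_def, vadd_eq_add, AddSubgroup.coe_neg,
    ← hn]
  simp only [Set.mem_ofPred_eq, ← neg_zsmul, add_comm _ x, hF.zsmul (-n) x]

variable {E : Type*} [NormedAddCommGroup E] {F : ℝ → E}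

lemma intervalIntegrable_comp_mul (hF : Periodic F 1) (hint : IntervalIntegrable F volume 0 1)
    (c a b : ℝ) : IntervalIntegrable (fun x => F (c * x)) volume a b := by
  rcases eq_or_ne c 0 with rfl | hc
  · simp
  · simpa [mul_div_cancel_left₀ _ hc] using
      (hF.intervalIntegrable₀ one_ne_zero hint (c * a) (c * b)).comp_mul_left (c := c)

variable [NormedSpace ℝ E]

lemma intervalIntegral_comp_nat_mul (hF : Periodic F 1) (hint : IntervalIntegrable F volume 0 1)
    {n : ℕ} (hn : n ≠ 0) : ∫ x in 0..1, F (n * x) = ∫ x in 0..1, F x := by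
  have h := hF.intervalIntegral_add_zsmul_eq n 0 (hF.intervalIntegrable₀ one_ne_zero hint)
  simp only [zero_add, natCast_zsmul, nsmul_eq_mul, mul_one] at h
  rw [intervalIntegral.integral_comp_mul_left _ (Nat.cast_ne_zero.mpr hn), mul_zero, mul_one, h,
    ← Nat.cast_smul_eq_nsmul ℝ, smul_smul, inv_mul_cancel₀ (Nat.cast_ne_zero.mpr hn),
    one_smul]

end Function.Periodic

lemma intervalIntegral_eq_half_mul_integral_add {F : ℝ → ℝ}
    (hint : IntervalIntegrable F volume 0 1) :
    ∫ x in 0..1, F x = 1 / 2 * ∫ y in 0..1, (F (y / 2) + F ((y + 1) / 2)) := by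
  have hleft : IntervalIntegrable F volume 0 (1 / 2) :=
    hint.mono_set (Set.uIcc_subset_uIcc (by simp) (by norm_num))
  have hright : IntervalIntegrable F volume (1 / 2) 1 :=
    hint.mono_set (Set.uIcc_subset_uIcc (by norm_num) (by simp))
  have h₁ : IntervalIntegrable (fun y => F (y / 2)) volume 0 1 := by
    simpa [div_eq_inv_mul] using hleft.comp_mul_left (c := 1 / 2)
  have h₂ : IntervalIntegrable (fun y => F ((y + 1) / 2)) volume 0 1 := by
    have := (hright.comp_mul_left (c := 1 / 2)).comp_add_right 1
    norm_num at this
    simpa [div_eq_inv_mul] using this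
  rw [intervalIntegral.integral_add h₁ h₂, ← intervalIntegral.integral_add_adjacent_intervals
    hleft hright, intervalIntegral.integral_comp_div _ two_ne_zero,
    intervalIntegral.integral_comp_add_right (fun y => F (y / 2)),
    intervalIntegral.integral_comp_div _ two_ne_zero]
  norm_num
  ring

noncomputable def logTwoSin (x : ℝ) : ℝ := log 2 + log |sin (π * x)|

@[fun_prop]
lemma measurable_logTwoSin : Measurable logTwoSin := by
  unfold logTwoSin; fun_prop

lemma logTwoSin_periodic : Function.Periodic logTwoSin 1 := by
  intro x
  simp [logTwoSin, mul_add, sin_add_pi]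

lemma logTwoSin_div_two_add {x : ℝ} (hx : sin (π * x) ≠ 0) :
    logTwoSin (x / 2) + logTwoSin ((x + 1) / 2) = logTwoSin x := by
  have hsin : sin (π * x) = 2 * sin (π * (x / 2)) * cos (π * (x / 2)) := by
    rw [← sin_two_mul]; ring_nf
  have hcos : sin (π * ((x + 1) / 2)) = cos (π * (x / 2)) := by
    rw [← sin_add_pi_div_two]; ring_nf
  rw [hsin] at hx
  have hs : sin (π * (x / 2)) ≠ 0 := by intro h; simp [h] at hx
  have hc : cos (π * (x / 2)) ≠ 0 := by intro h; simp [h] at hx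
  simp only [logTwoSin, hcos, hsin, abs_mul, abs_two]
  rw [log_mul (by positivity) (abs_ne_zero.mpr hc), log_mul two_ne_zero (abs_ne_zero.mpr hs)]
  ring

lemma ae_sin_pi_mul_ne_zero : ∀ᵐ x ∂(volume : Measure ℝ), sin (π * x) ≠ 0 := by
  refine measure_mono_null (fun x (hx : ¬ sin (π * x) ≠ 0) => ?_)
    ((Set.countable_range ((↑) : ℤ → ℝ)).measure_zero volume)
  obtain ⟨n, hn⟩ := sin_eq_zero_iff.mp (not_not.mp hx)
  exact ⟨n, by nlinarith [pi_pos]⟩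

lemma intervalIntegrable_log_sq : IntervalIntegrable (fun x => log x ^ 2) volume 0 1 := by
  refine ((intervalIntegral.intervalIntegrable_rpow' (r := -1 / 2) (by norm_num)).const_mul
    16).mono_fun (by fun_prop) ?_
  rw [EventuallyLE, Set.uIoc_of_le zero_le_one, ae_restrict_iff' measurableSet_Ioc]
  refine ae_of_all _ fun x ⟨hx0, hx1⟩ => ?_
  have hlog := abs_log_mul_self_rpow_lt x (1 / 4) hx0 hx1 (by norm_num)
  have hx : x ^ (-1 / 2 : ℝ) * (x ^ (1 / 4 : ℝ)) ^ 2 = 1 := by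
    rw [← rpow_natCast, ← rpow_mul hx0.le, ← rpow_add hx0]; norm_num
  rw [norm_of_nonneg (sq_nonneg _), norm_of_nonneg (by positivity)]
  have h2 : (log x * x ^ (1 / 4 : ℝ)) ^ 2 ≤ 16 := by
    nlinarith [abs_nonneg (log x * x ^ (1 / 4 : ℝ)), sq_abs (log x * x ^ (1 / 4 : ℝ))]
  calc log x ^ 2 = (log x * x ^ (1 / 4 : ℝ)) ^ 2 * x ^ (-1 / 2 : ℝ) := by
        rw [mul_pow, mul_assoc, mul_comm ((x ^ (1 / 4 : ℝ)) ^ 2), hx, mul_one]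
    _ ≤ 16 * x ^ (-1 / 2 : ℝ) := by gcongr

lemma mul_one_sub_le_sin_pi_mul {x : ℝ} (hx₀ : 0 ≤ x) (hx₁ : x ≤ 1) :
    x * (1 - x) ≤ sin (π * x) := by
  wlog hx : x ≤ 1 / 2 generalizing x
  · have h := this (x := 1 - x) (by linarith) (by linarith) (by linarith)
    rw [show π * (1 - x) = π - π * x by ring, sin_pi_sub] at h
    linarith
  have h := le_sin_mul (x := 2 * x) (by linarith) (by linarith)
  rw [← mul_assoc, div_mul_cancel₀ _ two_ne_zero] at h
  nlinarith

lemma abs_logTwoSin_le {x : ℝ} (hx : x ∈ Set.Ioo 0 1) :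
    |logTwoSin x| ≤ log 2 - log x - log (1 - x) := by
  obtain ⟨hx₀, hx₁⟩ := hx
  have hsin_pos : 0 < sin (π * x) :=
    sin_pos_of_pos_of_lt_pi (by positivity) (by nlinarith [pi_pos])
  have hupper : log (sin (π * x)) ≤ 0 := log_nonpos hsin_pos.le (sin_le_one _)
  have hlower : log x + log (1 - x) ≤ log (sin (π * x)) := by
    rw [← log_mul hx₀.ne' (by linarith)]
    exact log_le_log (mul_pos hx₀ (by linarith)) (mul_one_sub_le_sin_pi_mul hx₀.le hx₁.le)
  have hlog₂ : 0 ≤ log 2 := log_nonneg one_le_two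
  have hlogx : log x ≤ 0 := log_nonpos hx₀.le hx₁.le
  have hlogx' : log (1 - x) ≤ 0 := log_nonpos (by linarith) (by linarith)
  rw [logTwoSin, abs_of_pos hsin_pos, abs_le]
  constructor <;> linarith

lemma memLp_logTwoSin : MemLp logTwoSin 2 (volume.restrict (Set.Ioc 0 1)) := by
  have hlog : MemLp log 2 (volume.restrict (Set.Ioc 0 1)) :=
    (memLp_two_iff_integrable_sq (by fun_prop)).mpr
      ((intervalIntegrable_iff_integrableOn_Ioc_of_le zero_le_one).mp intervalIntegrable_log_sq)
  have hlog' : MemLp (fun x => log (1 - x)) 2 (volume.restrict (Set.Ioc 0 1)) := by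
    refine (memLp_two_iff_integrable_sq
      (measurable_log.comp (measurable_const.sub measurable_id)).aestronglyMeasurable).mpr
      ((intervalIntegrable_iff_integrableOn_Ioc_of_le zero_le_one).mp ?_)
    simpa using (intervalIntegrable_log_sq.comp_sub_left 1).symm
  refine ((memLp_const (log 2)).sub hlog |>.sub hlog').of_le (by fun_prop) ?_
  rw [← restrict_Ioo_eq_restrict_Ioc, ae_restrict_iff' measurableSet_Ioo]
  refine ae_of_all _ fun x hx => ?_
  rw [norm_eq_abs, norm_eq_abs]
  exact (abs_logTwoSin_le hx).trans (le_abs_self _)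

lemma memLp_logTwoSin_two_pow_mul (j : ℕ) :
    MemLp (fun x => logTwoSin (2 ^ j * x)) 2 (volume.restrict (Set.Ioc 0 1)) := by
  have hsq : IntervalIntegrable (fun x => logTwoSin x ^ 2) volume 0 1 :=
    (intervalIntegrable_iff_integrableOn_Ioc_of_le zero_le_one).mpr memLp_logTwoSin.integrable_sq
  refine (memLp_two_iff_integrable_sq
    (measurable_logTwoSin.comp (measurable_const_mul _)).aestronglyMeasurable).mpr
    ((intervalIntegrable_iff_integrableOn_Ioc_of_le zero_le_one).mp ?_)
  exact (logTwoSin_periodic.comp (· ^ 2)).intervalIntegrable_comp_mul hsq (2 ^ j) 0 1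

lemma intervalIntegrable_logTwoSin_two_pow_mul_mul (i j : ℕ) :
    IntervalIntegrable (fun x => logTwoSin (2 ^ i * x) * logTwoSin (2 ^ j * x)) volume 0 1 :=
  (intervalIntegrable_iff_integrableOn_Ioc_of_le zero_le_one).mpr
    ((memLp_logTwoSin_two_pow_mul i).integrable_mul (memLp_logTwoSin_two_pow_mul j))

lemma integral_logTwoSin_mul_two_pow_mul (m : ℕ) :
    ∫ x in 0..1, logTwoSin x * logTwoSin (2 ^ m * x)
      = (1 / 2) ^ m * ∫ x in 0..1, logTwoSin x ^ 2 := by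
  induction m with
  | zero => simp [sq]
  | succ m ih =>
    have hint : IntervalIntegrable (fun x => logTwoSin x * logTwoSin (2 ^ (m + 1) * x))
        volume 0 1 := by
      simpa using intervalIntegrable_logTwoSin_two_pow_mul_mul 0 (m + 1)
    have hsplit : ∀ᵐ y, y ∈ Set.uIoc (0 : ℝ) 1 →
        logTwoSin (y / 2) * logTwoSin (2 ^ (m + 1) * (y / 2))
          + logTwoSin ((y + 1) / 2) * logTwoSin (2 ^ (m + 1) * ((y + 1) / 2))
          = logTwoSin y * logTwoSin (2 ^ m * y) := by
      filter_upwards [ae_sin_pi_mul_ne_zero] with y hy _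
      have hshift : logTwoSin (2 ^ (m + 1) * ((y + 1) / 2)) = logTwoSin (2 ^ m * y) := by
        rw [show (2 : ℝ) ^ (m + 1) * ((y + 1) / 2) = 2 ^ m * y + (2 ^ m : ℕ) * 1 by
          push_cast; ring]
        exact logTwoSin_periodic.nat_mul _ _
      rw [hshift, show (2 : ℝ) ^ (m + 1) * (y / 2) = 2 ^ m * y by ring, ← add_mul,
        logTwoSin_div_two_add hy]
    rw [intervalIntegral_eq_half_mul_integral_add hint, intervalIntegral.integral_congr_ae hsplit,
      ih, pow_succ]
    ring

lemma integral_logTwoSin_two_pow_mul_mul (i j : ℕ) :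
    ∫ x in 0..1, logTwoSin (2 ^ i * x) * logTwoSin (2 ^ j * x)
      = (1 / 2) ^ Nat.dist i j * ∫ x in 0..1, logTwoSin x ^ 2 := by
  wlog hij : i ≤ j generalizing i j
  · rw [Nat.dist_comm, ← this j i (by omega)]
    simp_rw [mul_comm (logTwoSin (2 ^ i * _))]
  obtain ⟨k, rfl⟩ := Nat.exists_eq_add_of_le' hij
  have hper : Function.Periodic (fun y => logTwoSin y * logTwoSin (2 ^ k * y)) 1 :=
    logTwoSin_periodic.mul (by simpa using logTwoSin_periodic.comp_nat_mul (2 ^ k))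
  have hint : IntervalIntegrable (fun y => logTwoSin y * logTwoSin (2 ^ k * y)) volume 0 1 := by
    simpa using intervalIntegrable_logTwoSin_two_pow_mul_mul 0 k
  have h := hper.intervalIntegral_comp_nat_mul hint (n := 2 ^ i) (by positivity)
  simp only [Nat.cast_pow, Nat.cast_ofNat, ← mul_assoc, ← pow_add] at h
  rw [h, integral_logTwoSin_mul_two_pow_mul, Nat.dist_eq_sub_of_le hij, Nat.add_sub_cancel]

lemma ae_restrict_Ioc_tendsto_sum_logTwoSin_div :
    ∀ᵐ k ∂volume.restrict (Set.Ioc (0 : ℝ) 1),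
      Tendsto (fun n : ℕ => (∑ j ∈ range n, logTwoSin (2 ^ j * k)) / n) atTop (𝓝 0) :=
  ae_tendsto_sum_range_div_of_integral_mul_le memLp_logTwoSin_two_pow_mul fun i j => by
    rw [← intervalIntegral.integral_of_le zero_le_one, integral_logTwoSin_two_pow_mul_mul,
      mul_comm]

lemma periodic_sum_logTwoSin :
    Function.Periodic (fun k (n : ℕ) => ∑ j ∈ range n, logTwoSin (2 ^ j * k)) 1 := by
  intro k
  ext n
  refine sum_congr rfl fun j _ => ?_
  simpa [mul_add] using logTwoSin_periodic.nat_mul (2 ^ j) (2 ^ j * k)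

lemma tmScalingExp_eq {n : ℕ} (hn : n ≠ 0) (k : ℝ) :
    tmScalingExp n k = -1 + 2 / log 2 * ((∑ j ∈ range n, logTwoSin (2 ^ j * k)) / n) := by
  have hlog : log 2 ≠ 0 := (log_pos one_lt_two).ne'
  have hsum : ∑ j ∈ range n, logTwoSin (2 ^ j * k)
      = n * log 2 + ∑ j ∈ range n, log |sin (π * 2 ^ j * k)| := by
    simp [logTwoSin, sum_add_distrib, mul_assoc]
  rw [tmScalingExp, hsum]
  generalize ∑ j ∈ range n, log |sin (π * 2 ^ j * k)| = T
  field_simp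
  ring

theorem stmt_17 :
    ∀ᵐ k ∂(volume : Measure ℝ),
      Filter.Tendsto (fun n : ℕ => tmScalingExp n k) Filter.atTop (nhds (-1)) := by
  have hS := periodic_sum_logTwoSin.ae_of_ae_restrict_Ioc one_pos (t := 0)
    (p := fun s => Tendsto (fun n : ℕ => s n / n) atTop (𝓝 0))
    (by simpa using ae_restrict_Ioc_tendsto_sum_logTwoSin_div)
  filter_upwards [hS] with k hk
  have hlim := (hk.const_mul (2 / log 2)).const_add (-1)
  rw [mul_zero, add_zero] at hlim
  refine hlim.congr' ?_
  filter_upwards [eventually_ne_atTop 0] with n hn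
  rw [tmScalingExp_eq hn]
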